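/- arXiv:1103.6118 — 5 statements merged into one kernel-verified Lean document; each statement's English description precedes it below -/
import Mathlib

section
/- With slice-indicator basis functions, the matrix $M^t W^{-1} M$ equals the between-slices covariance matrix $\hat\Gamma = \sum_{j=1}^{h+1} f_j (\bar X_j - \bar X)(\bar X_j - \bar X)^t$. -/
open Matrix BigOperators Classical

theorem stmt_2 (n p h : ℕ) (hn : 0 < n)
    (X : Fin n → Fin p → ℝ) (Y : Fin n → ℝ)
    (S : Fin (h + 1) → Set ℝ)
    (hpart : ∀ i : Fin n, ∃! j : Fin (h + 1), Y i ∈ S j)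
    (hocc : ∀ j : Fin (h + 1), ∃ i : Fin n, Y i ∈ S j)
    (s : ℝ → Fin h → ℝ)
    (hs : ∀ y j, s y j = if y ∈ S j.castSucc then 1 else 0)
    (nj : Fin (h + 1) → ℕ)
    (hnj : ∀ j, nj j = (Finset.univ.filter (fun i : Fin n => Y i ∈ S j)).card)
    (f : Fin (h + 1) → ℝ) (hf : ∀ j, f j = (nj j : ℝ) / n)
    (Xbar : Fin p → ℝ) (hXbar : Xbar = (n : ℝ)⁻¹ • ∑ i, X i)
    (Xbarj : Fin (h + 1) → Fin p → ℝ)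
    (hXbarj : ∀ j, Xbarj j = (nj j : ℝ)⁻¹ •
      ∑ i ∈ Finset.univ.filter (fun i : Fin n => Y i ∈ S j), X i)
    (sbar : Fin h → ℝ) (hsbar : sbar = (n : ℝ)⁻¹ • ∑ i, s (Y i))
    (W : Matrix (Fin h) (Fin h) ℝ)
    (hW : W = (n : ℝ)⁻¹ • ∑ i, Matrix.vecMulVec (s (Y i) - sbar) (s (Y i) - sbar))
    (hWinv : IsUnit W.det)
    (M : Matrix (Fin h) (Fin p) ℝ)
    (hM : M = (n : ℝ)⁻¹ • ∑ i, Matrix.vecMulVec (s (Y i) - sbar) (X i - Xbar))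
    (Γ : Matrix (Fin p) (Fin p) ℝ)
    (hΓ : Γ = ∑ j, f j • Matrix.vecMulVec (Xbarj j - Xbar) (Xbarj j - Xbar)) :
    Mᵀ * W⁻¹ * M = Γ := by
  choose J hJ hJu using hpart
  have hmem : ∀ (i : Fin n) (j : Fin (h+1)), (Y i ∈ S j) ↔ J i = j := by
    intro i j
    constructor
    · intro hy; exact (hJu i j hy).symm
    · rintro rfl; exact hJ i
  have hN : (n : ℝ) ≠ 0 := by positivity
  -- nj as count of fibers
  have hnj' : ∀ j, (nj j : ℝ) = ∑ i : Fin n, (if J i = j then (1:ℝ) else 0) := by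
    intro j
    rw [hnj j, Finset.sum_boole]
    congr 1
    apply Finset.card_nbij id (by intro a ha; simpa [hmem] using ha)
      (by intro a ha b hb hab; exact hab)
      (by intro a ha; exact ⟨a, by simpa [hmem] using ha, rfl⟩)
  have hnjpos : ∀ j, (0:ℝ) < nj j := by
    intro j
    obtain ⟨i, hi⟩ := hocc j
    have : 0 < nj j := by
      rw [hnj j]
      exact Finset.card_pos.2 ⟨i, by simpa using hi⟩
    exact_mod_cast this
  have hfne : ∀ j, f j ≠ 0 := by
    intro j; rw [hf j]; exact div_ne_zero (ne_of_gt (hnjpos j)) hN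
  -- s values
  have hs' : ∀ (i : Fin n) (j : Fin h), s (Y i) j = if J i = j.castSucc then 1 else 0 := by
    intro i j; rw [hs]; simp [hmem]
  -- sbar
  have hsbar' : ∀ j : Fin h, sbar j = f j.castSucc := by
    intro j
    rw [hsbar, hf, hnj']
    simp only [Pi.smul_apply, Finset.sum_apply, smul_eq_mul]
    rw [div_eq_inv_mul]
    congr 1
    exact Finset.sum_congr rfl fun i _ => hs' i j
  -- fiberwise sum of f
  have hsumXj : ∀ (j : Fin (h+1)) (a : Fin p),
      ∑ i : Fin n, (if J i = j then X i a else 0) = (nj j : ℝ) * Xbarj j a := by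
    intro j a
    rw [hXbarj j]
    simp only [Pi.smul_apply, Finset.sum_apply, smul_eq_mul]
    rw [← mul_assoc, mul_inv_cancel₀ (ne_of_gt (by exact_mod_cast hnjpos j)), one_mul]
    rw [Finset.sum_filter]
    exact Finset.sum_congr rfl fun i _ => by simp [hmem]
  -- sum of all f equals 1
  have hsumnj : ∑ j : Fin (h+1), (nj j : ℝ) = n := by
    rw [Finset.sum_congr rfl fun j _ => hnj' j, Finset.sum_comm]
    rw [Finset.sum_congr rfl (fun i _ => Finset.sum_ite_eq (Finset.univ) (J i) (fun _ => (1:ℝ)))]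
    simp
  have hsumf : ∑ j : Fin (h+1), f j = 1 := by
    rw [Finset.sum_congr rfl fun j _ => hf j, ← Finset.sum_div, hsumnj, div_self hN]
  -- weighted mean identity
  have hmean : ∀ a : Fin p, ∑ j : Fin (h+1), f j * Xbarj j a = Xbar a := by
    intro a
    have : ∀ j : Fin (h+1), f j * Xbarj j a = (n:ℝ)⁻¹ * ∑ i : Fin n, (if J i = j then X i a else 0) := by
      intro j
      rw [hsumXj j a, hf j, div_eq_inv_mul, mul_assoc]
    rw [Finset.sum_congr rfl fun j _ => this j, ← Finset.mul_sum, Finset.sum_comm]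
    rw [Finset.sum_congr rfl (fun i _ => Finset.sum_ite_eq (Finset.univ) (J i) (fun _ => X i a))]
    simp [hXbar]
  -- centered mean identity
  have hu0 : ∀ a : Fin p, ∑ j : Fin (h+1), f j * (Xbarj j a - Xbar a) = 0 := by
    intro a
    simp only [mul_sub]
    rw [Finset.sum_sub_distrib, hmean a, ← Finset.sum_mul, hsumf, one_mul, sub_self]
  -- entrywise W
  have hW' : ∀ j k : Fin h, W j k =
      (if j = k then f j.castSucc else 0) - f j.castSucc * f k.castSucc := by
    intro j k
    have key : ∀ i, (s (Y i) j - sbar j) * (s (Y i) k - sbar k)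
        = (if J i = j.castSucc then (1:ℝ) else 0) * (if J i = k.castSucc then (1:ℝ) else 0)
          - f k.castSucc * (if J i = j.castSucc then 1 else 0)
          - f j.castSucc * (if J i = k.castSucc then 1 else 0)
          + f j.castSucc * f k.castSucc := by
      intro i
      rw [hs', hs', hsbar' j, hsbar' k]
      split_ifs <;> ring
    have hdiag : ∑ i : Fin n,
        ((if J i = j.castSucc then (1:ℝ) else 0) * (if J i = k.castSucc then (1:ℝ) else 0))
        = if j = k then (nj j.castSucc : ℝ) else 0 := by
      by_cases hjk : j = k
      · subst hjk
        rw [if_pos rfl, hnj' j.castSucc]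
        exact Finset.sum_congr rfl fun i _ => by by_cases h1 : J i = j.castSucc <;> simp [h1]
      · have hne : ∀ i : Fin n, ¬(J i = j.castSucc ∧ J i = k.castSucc) := by
          rintro i ⟨h1, h2⟩
          exact hjk (Fin.castSucc_injective h (h1 ▸ h2))
        rw [if_neg hjk]
        refine Finset.sum_eq_zero fun i _ => ?_
        rcases not_and_or.1 (hne i) with h1 | h1 <;> simp [h1]
    have : W j k = (n:ℝ)⁻¹ * ∑ i : Fin n,
        (s (Y i) j - sbar j) * (s (Y i) k - sbar k) := by
      rw [hW]
      simp [Matrix.smul_apply, Matrix.sum_apply, vecMulVec_apply]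
    rw [this, Finset.sum_congr rfl fun i _ => key i]
    rw [Finset.sum_add_distrib, Finset.sum_sub_distrib, Finset.sum_sub_distrib,
      ← Finset.mul_sum, ← Finset.mul_sum, ← hnj', ← hnj', hdiag,
      Finset.sum_const, Finset.card_univ, Fintype.card_fin, nsmul_eq_mul]
    have e1 : (nj j.castSucc : ℝ) = (n:ℝ) * f j.castSucc := by
      rw [hf]; field_simp
    have e2 : (nj k.castSucc : ℝ) = (n:ℝ) * f k.castSucc := by
      rw [hf]; field_simp
    rw [e1, e2]
    by_cases hjk : j = k
    · subst hjk
      rw [if_pos rfl, if_pos rfl]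
      field_simp
      ring
    · rw [if_neg hjk, if_neg hjk]
      field_simp
      ring
  -- entrywise M
  have hM' : ∀ (j : Fin h) (a : Fin p),
      M j a = f j.castSucc * (Xbarj j.castSucc a - Xbar a) := by
    intro j a
    have key : ∀ i, (s (Y i) j - sbar j) * (X i a - Xbar a)
        = (if J i = j.castSucc then X i a else 0)
          - Xbar a * (if J i = j.castSucc then 1 else 0)
          - f j.castSucc * X i a + f j.castSucc * Xbar a := by
      intro i
      rw [hs', hsbar' j]
      by_cases h1 : J i = j.castSucc <;> simp [h1] <;> ring
    have hXsum : ∑ i : Fin n, X i a = (n:ℝ) * Xbar a := by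
      rw [hXbar]
      simp only [Pi.smul_apply, Finset.sum_apply, smul_eq_mul]
      rw [← mul_assoc, mul_inv_cancel₀ hN, one_mul]
    have : M j a = (n:ℝ)⁻¹ * ∑ i : Fin n,
        (s (Y i) j - sbar j) * (X i a - Xbar a) := by
      rw [hM]
      simp [Matrix.smul_apply, Matrix.sum_apply, vecMulVec_apply]
    rw [this, Finset.sum_congr rfl fun i _ => key i]
    rw [Finset.sum_add_distrib, Finset.sum_sub_distrib, Finset.sum_sub_distrib,
      ← Finset.mul_sum, ← Finset.mul_sum, ← hnj', hsumXj, hXsum,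
      Finset.sum_const, Finset.card_univ, Fintype.card_fin, nsmul_eq_mul]
    rw [hf j.castSucc]
    field_simp
    ring
  -- abbreviations
  set F : ℝ := f (Fin.last h) with hF
  have hFne : F ≠ 0 := hfne _
  have hgsum : ∑ j : Fin h, f j.castSucc = 1 - F := by
    have := hsumf
    rw [Fin.sum_univ_castSucc] at this
    linarith
  have hulast : ∀ a : Fin p, ∑ j : Fin h, f j.castSucc * (Xbarj j.castSucc a - Xbar a)
      = -(F * (Xbarj (Fin.last h) a - Xbar a)) := by
    intro a
    have := hu0 a
    rw [Fin.sum_univ_castSucc] at this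
    linarith
  -- the explicit inverse
  set V : Matrix (Fin h) (Fin h) ℝ :=
    Matrix.of (fun j k => (if j = k then (f j.castSucc)⁻¹ else 0) + F⁻¹) with hV
  have hWV : W * V = 1 := by
    ext j k
    rw [Matrix.mul_apply]
    have key : ∀ l : Fin h, W j l * V l k
        = ((if j = l then f j.castSucc else 0) - f j.castSucc * f l.castSucc)
          * ((if l = k then (f l.castSucc)⁻¹ else 0) + F⁻¹) := by
      intro l; rw [hW' j l, hV]; rfl
    rw [Finset.sum_congr rfl fun l _ => key l]
    have expand : ∀ l : Fin h,
        ((if j = l then f j.castSucc else 0) - f j.castSucc * f l.castSucc)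
          * ((if l = k then (f l.castSucc)⁻¹ else 0) + F⁻¹)
        = (if j = l then (if l = k then f j.castSucc * (f l.castSucc)⁻¹ else 0)
              + f j.castSucc * F⁻¹ else 0)
          - (if l = k then f j.castSucc * f l.castSucc * (f l.castSucc)⁻¹ else 0)
          - f j.castSucc * F⁻¹ * f l.castSucc := by
      intro l
      split_ifs <;> ring
    rw [Finset.sum_congr rfl fun l _ => expand l]
    rw [Finset.sum_sub_distrib, Finset.sum_sub_distrib, Finset.sum_ite_eq Finset.univ j,
      Finset.sum_ite_eq' Finset.univ k, ← Finset.mul_sum, hgsum]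
    simp only [Finset.mem_univ, if_true]
    rw [mul_assoc, mul_inv_cancel₀ (hfne k.castSucc), mul_one]
    by_cases hjk : j = k
    · subst hjk
      rw [if_pos rfl, Matrix.one_apply_eq, mul_inv_cancel₀ (hfne j.castSucc)]
      field_simp
      ring
    · rw [if_neg hjk, Matrix.one_apply_ne hjk]
      field_simp
      ring
  have hWinveq : W⁻¹ = V := Matrix.inv_eq_right_inv hWV
  -- final computation
  rw [hWinveq]
  ext a b
  rw [Matrix.mul_apply, hΓ]
  have col : ∀ k : Fin h, (Mᵀ * V) a k
      = (Xbarj k.castSucc a - Xbar a) - (Xbarj (Fin.last h) a - Xbar a) := by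
    intro k
    rw [Matrix.mul_apply]
    have key : ∀ j : Fin h, Mᵀ a j * V j k
        = (if j = k then f j.castSucc * (Xbarj j.castSucc a - Xbar a) * (f k.castSucc)⁻¹ else 0)
          + F⁻¹ * (f j.castSucc * (Xbarj j.castSucc a - Xbar a)) := by
      intro j
      rw [Matrix.transpose_apply, hM' j a, hV]
      by_cases h1 : j = k <;> simp [h1] <;> ring
    rw [Finset.sum_congr rfl fun j _ => key j]
    rw [Finset.sum_add_distrib, Finset.sum_ite_eq' Finset.univ k, ← Finset.mul_sum, hulast a]
    simp only [Finset.mem_univ, if_true]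
    rw [mul_comm (f k.castSucc), mul_assoc, mul_inv_cancel₀ (hfne k.castSucc), mul_one]
    field_simp
    ring
  rw [Finset.sum_congr rfl fun k _ => by rw [col k, hM' k b]]
  have expand2 : ∀ k : Fin h,
      ((Xbarj k.castSucc a - Xbar a) - (Xbarj (Fin.last h) a - Xbar a))
        * (f k.castSucc * (Xbarj k.castSucc b - Xbar b))
      = f k.castSucc * ((Xbarj k.castSucc a - Xbar a) * (Xbarj k.castSucc b - Xbar b))
        - (Xbarj (Fin.last h) a - Xbar a) * (f k.castSucc * (Xbarj k.castSucc b - Xbar b)) := by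
    intro k; ring
  rw [Finset.sum_congr rfl fun k _ => expand2 k, Finset.sum_sub_distrib,
    ← Finset.mul_sum, hulast b]
  have hΓsum : ∀ j : Fin (h+1), (f j • vecMulVec (Xbarj j - Xbar) (Xbarj j - Xbar)) a b
      = f j * ((Xbarj j a - Xbar a) * (Xbarj j b - Xbar b)) := by
    intro j; simp [vecMulVec_apply]
  rw [Matrix.sum_apply, Finset.sum_congr rfl fun j _ => hΓsum j, Fin.sum_univ_castSucc]
  ring
end

section
/- The regularized criterion $G_\Omega$ is scale-invariant in $(b,c)$: for every nonzero real $t$, $G_\Omega(\mu, V, t b, c/t) = G_\Omega(\mu, V, b, c)$. -/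
open Matrix

noncomputable def Gcrit (p h : ℕ) (Xbar : Fin p → ℝ) (sbar : Fin h → ℝ)
    (Sighat : Matrix (Fin p) (Fin p) ℝ) (W : Matrix (Fin h) (Fin h) ℝ)
    (M : Matrix (Fin h) (Fin p) ℝ)
    (μ : Fin p → ℝ) (V : Matrix (Fin p) (Fin p) ℝ) (b : Fin p → ℝ)
    (c : Fin h → ℝ) : ℝ :=
  Real.log V.det + (Sighat * V⁻¹).trace
    + (μ - Xbar + (sbar ⬝ᵥ c) • V.mulVec b) ⬝ᵥ
        V⁻¹.mulVec (μ - Xbar + (sbar ⬝ᵥ c) • V.mulVec b)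
    + (c ⬝ᵥ W.mulVec c) * (b ⬝ᵥ V.mulVec b) - 2 * (c ⬝ᵥ M.mulVec b)

noncomputable def GOmega (p h : ℕ) (Xbar : Fin p → ℝ) (sbar : Fin h → ℝ)
    (Sighat Sig Ω : Matrix (Fin p) (Fin p) ℝ) (W : Matrix (Fin h) (Fin h) ℝ)
    (M : Matrix (Fin h) (Fin p) ℝ)
    (μ : Fin p → ℝ) (V : Matrix (Fin p) (Fin p) ℝ) (b : Fin p → ℝ)
    (c : Fin h → ℝ) : ℝ :=
  Gcrit p h Xbar sbar Sighat W M μ V b c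
    + (b ⬝ᵥ Ω⁻¹.mulVec b) * (b ⬝ᵥ V.mulVec b) * (c ⬝ᵥ W.mulVec c) /
        (b ⬝ᵥ Sig.mulVec b)

/-
Every term of `Gcrit` is a product of forms homogeneous in `b` and in `c` whose degrees cancel
under `(b, c) ↦ (t b, c / t)`. In the penalty the numerator and the denominator both pick up the
factor `t ^ 2`, which cancels since `t ≠ 0`.
-/

theorem smul_dotProduct_mulVec_smul {m n R : Type*} [Fintype m] [Fintype n] [CommSemiring R]
    (A : Matrix m n R) (s t : R) (u : m → R) (v : n → R) :
    (s • u) ⬝ᵥ A *ᵥ (t • v) = s * t * (u ⬝ᵥ A *ᵥ v) := by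
  rw [mulVec_smul, smul_dotProduct, dotProduct_smul, smul_eq_mul, smul_eq_mul]
  ring

theorem Gcrit_smul_smul_inv (p h : ℕ) (Xbar : Fin p → ℝ) (sbar : Fin h → ℝ)
    (Sighat : Matrix (Fin p) (Fin p) ℝ) (W : Matrix (Fin h) (Fin h) ℝ)
    (M : Matrix (Fin h) (Fin p) ℝ) (μ : Fin p → ℝ) (V : Matrix (Fin p) (Fin p) ℝ)
    (b : Fin p → ℝ) (c : Fin h → ℝ) {t : ℝ} (ht : t ≠ 0) :
    Gcrit p h Xbar sbar Sighat W M μ V (t • b) (t⁻¹ • c) =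
      Gcrit p h Xbar sbar Sighat W M μ V b c := by
  have hmean : (sbar ⬝ᵥ t⁻¹ • c) • V *ᵥ (t • b) = (sbar ⬝ᵥ c) • V *ᵥ b := by
    rw [dotProduct_smul, mulVec_smul, smul_smul, smul_eq_mul, mul_right_comm, inv_mul_cancel₀ ht,
      one_mul]
  have hcross : (t⁻¹ • c) ⬝ᵥ M *ᵥ (t • b) = c ⬝ᵥ M *ᵥ b := by
    rw [smul_dotProduct_mulVec_smul, inv_mul_cancel₀ ht, one_mul]
  have hvar : (t⁻¹ • c) ⬝ᵥ W *ᵥ (t⁻¹ • c) * ((t • b) ⬝ᵥ V *ᵥ (t • b)) =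
      (c ⬝ᵥ W *ᵥ c) * (b ⬝ᵥ V *ᵥ b) := by
    rw [smul_dotProduct_mulVec_smul, smul_dotProduct_mulVec_smul]
    field_simp
  unfold Gcrit
  rw [hmean, hcross, hvar]

theorem stmt_4_general (p h : ℕ) (Xbar : Fin p → ℝ) (sbar : Fin h → ℝ)
    (Sighat Sig Ω V : Matrix (Fin p) (Fin p) ℝ)
    (W : Matrix (Fin h) (Fin h) ℝ)
    (M : Matrix (Fin h) (Fin p) ℝ)
    (μ b : Fin p → ℝ) (c : Fin h → ℝ)
    (t : ℝ) (ht : t ≠ 0) :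
    GOmega p h Xbar sbar Sighat Sig Ω W M μ V (t • b) (t⁻¹ • c) =
      GOmega p h Xbar sbar Sighat Sig Ω W M μ V b c := by
  have hpenalty : (t • b) ⬝ᵥ Ω⁻¹ *ᵥ (t • b) * ((t • b) ⬝ᵥ V *ᵥ (t • b)) *
        ((t⁻¹ • c) ⬝ᵥ W *ᵥ (t⁻¹ • c)) / ((t • b) ⬝ᵥ Sig *ᵥ (t • b)) =
      (b ⬝ᵥ Ω⁻¹ *ᵥ b) * (b ⬝ᵥ V *ᵥ b) * (c ⬝ᵥ W *ᵥ c) / (b ⬝ᵥ Sig *ᵥ b) := by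
    simp only [smul_dotProduct_mulVec_smul]
    rw [show t * t * (b ⬝ᵥ Ω⁻¹ *ᵥ b) * (t * t * (b ⬝ᵥ V *ᵥ b)) * (t⁻¹ * t⁻¹ * (c ⬝ᵥ W *ᵥ c)) =
        t * t * ((b ⬝ᵥ Ω⁻¹ *ᵥ b) * (b ⬝ᵥ V *ᵥ b) * (c ⬝ᵥ W *ᵥ c)) by field_simp,
      mul_div_mul_left _ _ (mul_ne_zero ht ht)]
  unfold GOmega
  rw [Gcrit_smul_smul_inv _ _ _ _ _ _ _ _ _ _ _ ht, hpenalty]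

theorem stmt_4 (p h : ℕ) (Xbar : Fin p → ℝ) (sbar : Fin h → ℝ)
    (Sighat Sig Ω V : Matrix (Fin p) (Fin p) ℝ)
    (hV : V.PosDef) (hSig : Sig.PosDef) (hSighat : Sighat.PosDef) (hΩ : Ω.PosDef)
    (W : Matrix (Fin h) (Fin h) ℝ) (hW : W.PosSemidef)
    (M : Matrix (Fin h) (Fin p) ℝ)
    (μ b : Fin p → ℝ) (hb : b ≠ 0) (c : Fin h → ℝ)
    (t : ℝ) (ht : t ≠ 0) :
    GOmega p h Xbar sbar Sighat Sig Ω W M μ V (t • b) (t⁻¹ • c) =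
      GOmega p h Xbar sbar Sighat Sig Ω W M μ V b c :=
  stmt_4_general p h Xbar sbar Sighat Sig Ω V W M μ b c t ht
end

section
/- Let $\hat\Sigma$ be positive definite, $\hat b\neq 0$, $\hat\lambda\in(0,1)$, and $V_0 = \hat\Sigma - \frac{\hat\lambda}{\hat b^t\hat\Sigma\hat b}\hat\Sigma \hat b \hat b^t \hat\Sigma$. Define $\alpha = \frac{\hat\lambda}{(1-\hat\lambda)^2\,\hat b^t\hat\Sigma\hat b}$. Then $V_0 + \alpha\, V_0 \hat b \hat b^t V_0 = \hat\Sigma$, i.e. $V_0$ satisfies the likelihood fixed-point equation $\hat\Sigma = V + (\hat c^t W \hat c)\, V \hat b \hat b^t V$ with $\hat c^t W \hat c = \alpha$. -/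
/-! Downdating by the rank-one term only rescales the direction `Σ̂b̂`: `V₀ b̂ = (1 - λ̂) Σ̂ b̂`.
Hence `α V₀b̂ (V₀b̂)ᵗ = (λ̂ / b̂ᵗΣ̂b̂) Σ̂b̂ (Σ̂b̂)ᵗ`, which is exactly the term subtracted from `Σ̂`. -/

open Matrix

section RankOneDowndate

variable {n 𝕜 : Type*} [Fintype n] [Field 𝕜]

def rankOneDowndate (S : Matrix n n 𝕜) (b : n → 𝕜) (t : 𝕜) : Matrix n n 𝕜 :=
  S - (t / (b ⬝ᵥ S *ᵥ b)) • vecMulVec (S *ᵥ b) (S *ᵥ b)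

variable {S : Matrix n n 𝕜} {b : n → 𝕜}

theorem rankOneDowndate_mulVec (hs : b ⬝ᵥ S *ᵥ b ≠ 0) (t : 𝕜) :
    rankOneDowndate S b t *ᵥ b = (1 - t) • S *ᵥ b := by
  rw [rankOneDowndate, sub_mulVec, smul_mulVec, vecMulVec_mulVec, op_smul_eq_smul,
    dotProduct_comm (S *ᵥ b), smul_smul, div_mul_cancel₀ _ hs, sub_smul, one_smul]

theorem rankOneDowndate_add_smul_vecMulVec_mulVec (hs : b ⬝ᵥ S *ᵥ b ≠ 0) {t : 𝕜} (ht : t ≠ 1) :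
    rankOneDowndate S b t + (t / ((1 - t) ^ 2 * (b ⬝ᵥ S *ᵥ b))) •
      vecMulVec (rankOneDowndate S b t *ᵥ b) (rankOneDowndate S b t *ᵥ b) = S := by
  have h1t : 1 - t ≠ 0 := sub_ne_zero.mpr ht.symm
  have hcoeff : t / ((1 - t) ^ 2 * (b ⬝ᵥ S *ᵥ b)) * (1 - t) * (1 - t) = t / (b ⬝ᵥ S *ᵥ b) := by
    field_simp
  rw [rankOneDowndate_mulVec hs, smul_vecMulVec, vecMulVec_smul, smul_smul, smul_smul, hcoeff,
    rankOneDowndate, sub_add_cancel]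

end RankOneDowndate

theorem stmt_6 (p : ℕ) (Sig : Matrix (Fin p) (Fin p) ℝ) (hSig : Sig.PosDef)
    (b : Fin p → ℝ) (hb : b ≠ 0) (lam : ℝ) (hlam : 0 < lam ∧ lam < 1)
    (V₀ : Matrix (Fin p) (Fin p) ℝ)
    (hV₀ : V₀ = Sig - (lam / (b ⬝ᵥ Sig.mulVec b)) •
      Matrix.vecMulVec (Sig.mulVec b) (Sig.mulVec b))
    (α : ℝ) (hα : α = lam / ((1 - lam) ^ 2 * (b ⬝ᵥ Sig.mulVec b))) :
    V₀ + α • Matrix.vecMulVec (V₀.mulVec b) (V₀.mulVec b) = Sig := by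
  have hs : b ⬝ᵥ Sig *ᵥ b ≠ 0 := by simpa using (hSig.dotProduct_mulVec_pos hb).ne'
  subst hV₀ hα
  exact rankOneDowndate_add_smul_vecMulVec_mulVec hs hlam.2.ne
end

section
/- (PCA+SIR as GRSIR) Let $\hat\Sigma$ be symmetric positive definite with orthonormal eigenpairs $(\lambda_j, q_j)$, $\hat\Gamma$ symmetric positive semidefinite, $1\le d\le p$, $P = \sum_{j=1}^d q_j q_j^t$, $\tau > 0$, and $\Omega_2 = \frac1\tau \sum_{j=1}^d \frac{1}{\lambda_j} q_j q_j^t$. If $\tilde b \in \mathbb{R}^p$ and $\tilde\lambda\in\mathbb{R}$ satisfy $P\hat\Gamma P \tilde b = \tilde\lambda\, P\hat\Sigma P\, \tilde b$, then $b = P\tilde b$ satisfies $\Omega_2 \hat\Gamma b = \lambda\,(\Omega_2 \hat\Sigma + I_p)\, b$ with $\lambda = \tilde\lambda/(1+\tau)$. -/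
open Matrix BigOperators

lemma vmv_mul_vmv {p : ℕ} (a b c e : Fin p → ℝ) :
    Matrix.vecMulVec a b * Matrix.vecMulVec c e = (b ⬝ᵥ c) • Matrix.vecMulVec a e := by
  ext i j
  simp [Matrix.mul_apply, Matrix.vecMulVec_apply, dotProduct, Finset.sum_mul,
    Finset.mul_sum]
  ring_nf
  apply Finset.sum_congr rfl
  intro k _
  ring

lemma sum_vmv_mul {p : ℕ} (q : Fin p → Fin p → ℝ)
    (horth : ∀ i j, q i ⬝ᵥ q j = if i = j then (1 : ℝ) else 0)
    (s t : Finset (Fin p)) (c e : Fin p → ℝ) :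
    (∑ i ∈ s, c i • Matrix.vecMulVec (q i) (q i)) *
      (∑ j ∈ t, e j • Matrix.vecMulVec (q j) (q j)) =
    ∑ i ∈ s ∩ t, (c i * e i) • Matrix.vecMulVec (q i) (q i) := by
  rw [Finset.sum_mul_sum]
  have : ∀ i ∈ s, ∀ j ∈ t,
      (c i • Matrix.vecMulVec (q i) (q i)) * (e j • Matrix.vecMulVec (q j) (q j)) =
      if i = j then (c i * e j) • Matrix.vecMulVec (q i) (q j) else 0 := by
    intro i _ j _
    rw [Matrix.smul_mul, Matrix.mul_smul, vmv_mul_vmv, horth]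
    split
    · simp [smul_smul]
    · simp
  rw [Finset.sum_congr rfl fun i hi => Finset.sum_congr rfl fun j hj => this i hi j hj]
  simp only [Finset.sum_ite_eq, Finset.sum_ite_eq']
  rw [← Finset.sum_filter, Finset.filter_mem_eq_inter]

theorem stmt_11 (p d : ℕ) (hd : 1 ≤ d) (hdp : d ≤ p)
    (q : Fin p → Fin p → ℝ)
    (horth : ∀ i j, q i ⬝ᵥ q j = if i = j then (1 : ℝ) else 0)
    (lam : Fin p → ℝ) (hlam : ∀ j, 0 < lam j)
    (Sig : Matrix (Fin p) (Fin p) ℝ)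
    (hSig : Sig = ∑ j, lam j • Matrix.vecMulVec (q j) (q j))
    (Γ : Matrix (Fin p) (Fin p) ℝ) (hΓ : Γ.PosSemidef)
    (P : Matrix (Fin p) (Fin p) ℝ)
    (hP : P = ∑ j ∈ Finset.univ.filter (fun j : Fin p => (j : ℕ) < d),
      Matrix.vecMulVec (q j) (q j))
    (τ : ℝ) (hτ : 0 < τ)
    (Ω₂ : Matrix (Fin p) (Fin p) ℝ)
    (hΩ₂ : Ω₂ = τ⁻¹ • ∑ j ∈ Finset.univ.filter (fun j : Fin p => (j : ℕ) < d),
      (lam j)⁻¹ • Matrix.vecMulVec (q j) (q j))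
    (btil : Fin p → ℝ) (ltil : ℝ)
    (heig : (P * Γ * P).mulVec btil = ltil • (P * Sig * P).mulVec btil) :
    (Ω₂ * Γ).mulVec (P.mulVec btil) =
      (ltil / (1 + τ)) • ((Ω₂ * Sig + 1).mulVec (P.mulVec btil)) := by
  set S := Finset.univ.filter (fun j : Fin p => (j : ℕ) < d) with hS
  have hP1 : P = ∑ j ∈ S, (1 : ℝ) • Matrix.vecMulVec (q j) (q j) := by
    simp [hP]
  have hPP : P * P = P := by
    rw [hP1, sum_vmv_mul q horth]
    simp [hP]
  have key : (∑ j ∈ S, (lam j)⁻¹ • Matrix.vecMulVec (q j) (q j)) * Sig = P := by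
    rw [hSig, sum_vmv_mul q horth, Finset.inter_univ, hP]
    apply Finset.sum_congr rfl
    intro j _
    rw [inv_mul_cancel₀ (hlam j).ne', one_smul]
  have hOS : Ω₂ * Sig = τ⁻¹ • P := by
    rw [hΩ₂, Matrix.smul_mul, key]
  have hOP : Ω₂ * P = Ω₂ := by
    rw [hΩ₂, hP1, Matrix.smul_mul, sum_vmv_mul q horth, Finset.inter_self]
    simp
  have hmain : Ω₂ * (P * Sig * P) = τ⁻¹ • P := by
    calc Ω₂ * (P * Sig * P) = (Ω₂ * P) * Sig * P := by simp only [mul_assoc]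
      _ = (Ω₂ * Sig) * P := by rw [hOP]
      _ = τ⁻¹ • (P * P) := by rw [hOS, Matrix.smul_mul]
      _ = τ⁻¹ • P := by rw [hPP]
  have hΓside : Ω₂ * Γ * P = Ω₂ * (P * Γ * P) := by
    calc Ω₂ * Γ * P = (Ω₂ * P) * Γ * P := by rw [hOP]
      _ = Ω₂ * (P * Γ * P) := by simp only [mul_assoc]
  have hL : (Ω₂ * Γ).mulVec (P.mulVec btil) = (ltil * τ⁻¹) • P.mulVec btil := by
    rw [Matrix.mulVec_mulVec, hΓside, ← Matrix.mulVec_mulVec, heig,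
      Matrix.mulVec_smul, Matrix.mulVec_mulVec, hmain, Matrix.smul_mulVec,
      smul_smul]
  have hR : (Ω₂ * Sig + 1).mulVec (P.mulVec btil) = (τ⁻¹ + 1) • P.mulVec btil := by
    rw [Matrix.add_mulVec, Matrix.one_mulVec, hOS, Matrix.smul_mulVec,
      Matrix.mulVec_mulVec, hPP, add_smul, one_smul]
  rw [hL, hR, smul_smul]
  congr 1
  have h1 : (1 : ℝ) + τ ≠ 0 := by positivity
  field_simp
end

section
/- (Dimension reduction equivalence) Let $\hat\Sigma$ be symmetric positive definite with orthonormal eigenpairs $(\lambda_j,q_j)_{j=1}^p$, $\varphi:\mathbb{R}\to\mathbb{R}$ arbitrary, $1\le d\le p$, $P=\sum_{j=1}^d q_j q_j^t$, $\Omega(\varphi)=\sum_{j=1}^d \varphi(\lambda_j) q_j q_j^t$, and $\tilde\Omega(\varphi)=\sum_{j=1}^p \varphi(\lambda_j) q_j q_j^t$. Let $\hat\Gamma$ be any $p\times p$ matrix. If $\tilde b\in\mathbb{R}^p$ and $\tilde\lambda\in\mathbb{R}$ satisfy $\tilde\Omega(\varphi)\, P\hat\Gamma P\, \tilde b = \tilde\lambda\,(\tilde\Omega(\varphi)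 P \hat\Sigma P + I_p)\,\tilde b$, then $b = P\tilde b$ satisfies $\Omega(\varphi)\hat\Gamma b = \tilde\lambda\,(\Omega(\varphi)\hat\Sigma + I_p)\, b$. -/
open Matrix BigOperators

lemma key_sum_mul (p : ℕ) (q : Fin p → Fin p → ℝ)
    (horth : ∀ i j, q i ⬝ᵥ q j = if i = j then (1 : ℝ) else 0)
    (s t : Finset (Fin p)) (c e : Fin p → ℝ) :
    (∑ j ∈ s, c j • Matrix.vecMulVec (q j) (q j)) *
      (∑ i ∈ t, e i • Matrix.vecMulVec (q i) (q i)) =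
    ∑ j ∈ s ∩ t, (c j * e j) • Matrix.vecMulVec (q j) (q j) := by
  have hE : ∀ i j, Matrix.vecMulVec (q i) (q i) * Matrix.vecMulVec (q j) (q j) =
      if i = j then Matrix.vecMulVec (q i) (q i) else (0 : Matrix (Fin p) (Fin p) ℝ) := by
    intro i j
    have hd : ∀ a b : Fin p, ∑ k, q i a * q i k * (q j k * q j b)
        = q i a * q j b * (q i ⬝ᵥ q j) := by
      intro a b
      rw [dotProduct, Finset.mul_sum]
      exact Finset.sum_congr rfl (fun k _ => by ring)
    ext a b
    by_cases h : i = j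
    · subst h
      simp [Matrix.mul_apply, Matrix.vecMulVec_apply, hd, horth]
    · simp [Matrix.mul_apply, Matrix.vecMulVec_apply, hd, horth, h]
  rw [Finset.sum_mul_sum]
  have : ∀ j ∈ s, ∀ i ∈ t, (c j • Matrix.vecMulVec (q j) (q j)) * (e i • Matrix.vecMulVec (q i) (q i))
      = if i = j then (c j * e i) • Matrix.vecMulVec (q j) (q j) else 0 := by
    intro j _ i _
    rw [smul_mul_smul_comm, hE]
    by_cases h : i = j
    · subst h; simp
    · have h2 : j ≠ i := fun h' => h h'.symm
      simp [h, h2]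
  calc ∑ j ∈ s, ∑ i ∈ t, (c j • Matrix.vecMulVec (q j) (q j)) * (e i • Matrix.vecMulVec (q i) (q i))
      = ∑ j ∈ s, ∑ i ∈ t, if i = j then (c j * e i) • Matrix.vecMulVec (q j) (q j) else 0 := by
        exact Finset.sum_congr rfl fun j hj => Finset.sum_congr rfl fun i hi => this j hj i hi
    _ = ∑ j ∈ s ∩ t, (c j * e j) • Matrix.vecMulVec (q j) (q j) := by
        simp only [Finset.sum_ite_eq']
        rw [← Finset.sum_filter, Finset.filter_mem_eq_inter]

theorem stmt_12 (p d : ℕ) (hd : 1 ≤ d) (hdp : d ≤ p)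
    (q : Fin p → Fin p → ℝ)
    (horth : ∀ i j, q i ⬝ᵥ q j = if i = j then (1 : ℝ) else 0)
    (lam : Fin p → ℝ) (hlam : ∀ j, 0 < lam j)
    (Sig : Matrix (Fin p) (Fin p) ℝ)
    (hSig : Sig = ∑ j, lam j • Matrix.vecMulVec (q j) (q j))
    (φ : ℝ → ℝ)
    (P : Matrix (Fin p) (Fin p) ℝ)
    (hP : P = ∑ j ∈ Finset.univ.filter (fun j : Fin p => (j : ℕ) < d),
      Matrix.vecMulVec (q j) (q j))
    (Ω : Matrix (Fin p) (Fin p) ℝ)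
    (hΩ : Ω = ∑ j ∈ Finset.univ.filter (fun j : Fin p => (j : ℕ) < d),
      φ (lam j) • Matrix.vecMulVec (q j) (q j))
    (Ωtil : Matrix (Fin p) (Fin p) ℝ)
    (hΩtil : Ωtil = ∑ j, φ (lam j) • Matrix.vecMulVec (q j) (q j))
    (Γ : Matrix (Fin p) (Fin p) ℝ)
    (btil : Fin p → ℝ) (ltil : ℝ)
    (heig : (Ωtil * (P * Γ * P)).mulVec btil =
      ltil • ((Ωtil * (P * Sig * P) + 1).mulVec btil)) :
    (Ω * Γ).mulVec (P.mulVec btil) =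
      ltil • ((Ω * Sig + 1).mulVec (P.mulVec btil)) := by
  set F := Finset.univ.filter (fun j : Fin p => (j : ℕ) < d) with hF
  have hP1 : P = ∑ j ∈ F, (1 : ℝ) • Matrix.vecMulVec (q j) (q j) := by
    rw [hP]; simp
  have hPΩt : P * Ωtil = Ω := by
    rw [hP1, hΩtil, hΩ, key_sum_mul p q horth]
    simp
  have hΩP : Ω * P = Ω := by
    rw [hΩ, hP1, key_sum_mul p q horth]
    simp
  have hOSP : Ω * Sig * P = Ω * Sig := by
    rw [hΩ, hSig, hP1, key_sum_mul p q horth, key_sum_mul p q horth]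
    simp
  have h1 : P * (Ωtil * (P * Γ * P)) = Ω * Γ * P := by
    simp only [← mul_assoc, hPΩt, hΩP]
  have h2 : P * (Ωtil * (P * Sig * P) + 1) = (Ω * Sig + 1) * P := by
    rw [mul_add, add_mul, mul_one, one_mul]
    congr 1
    simp only [← mul_assoc, hPΩt, hΩP, hOSP]
  rw [Matrix.mulVec_mulVec, Matrix.mulVec_mulVec]
  have h3 : (P * (Ωtil * (P * Γ * P))).mulVec btil =
      ltil • ((P * (Ωtil * (P * Sig * P) + 1)).mulVec btil) := by
    conv_lhs => rw [← Matrix.mulVec_mulVec]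
    rw [heig, Matrix.mulVec_smul, Matrix.mulVec_mulVec]
  rwa [h1, h2] at h3
end
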